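/- Let (V, /, •) be a static valuation algebra and let H ∈ V be fixed. Then there exists a trivial valuation algebra ({H}, /₀, •₀) on the single valuation H such that x/H = x/₀H for every formula x. -/

import Mathlib

/-- Formulas over a set of atoms `A`: x ::= T | a | ¬x | x ∧ y. -/
inductive Fm (A : Type) : Type where
  | tru : Fm A
  | atom : A → Fm A
  | neg : Fm A → Fm A
  | con : Fm A → Fm A → Fm A

/-- Trees over `A`: X ::= T | F | X ⊴ a ⊵ X. -/
inductive Tr (A : Type) : Type where
  | tt : Tr A
  | ff : Tr A
  | node : Tr A → A → Tr A → Tr A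

namespace Tr

/-- The substitution X[T ↦ Y, F ↦ Z]. -/
def subst {A : Type} : Tr A → Tr A → Tr A → Tr A
  | tt, Y, _ => Y
  | ff, _, Z => Z
  | node l a r, Y, Z => node (subst l Y Z) a (subst r Y Z)

/-- All leaves of the tree are T. -/
def closedT {A : Type} : Tr A → Prop
  | tt => True
  | ff => False
  | node l _ r => closedT l ∧ closedT r

/-- All leaves of the tree are F. -/
def closedF {A : Type} : Tr A → Prop
  | tt => False
  | ff => True
  | node l _ r => closedF l ∧ closedF r

/-- A tree is open if it is neither closed by T nor closed by F. -/
def IsOpen {A : Type} (X : Tr A) : Prop := ¬ closedT X ∧ ¬ closedF X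

/-- The tree has at least one T leaf. -/
def hasT {A : Type} : Tr A → Prop
  | tt => True
  | ff => False
  | node l _ r => hasT l ∨ hasT r

/-- The tree has at least one F leaf. -/
def hasF {A : Type} : Tr A → Prop
  | tt => False
  | ff => True
  | node l _ r => hasF l ∨ hasF r

end Tr

/-- A formula is constant-free if it contains no occurrence of T. -/
def Fm.constFree {A : Type} : Fm A → Prop
  | .tru => False
  | .atom _ => True
  | .neg x => x.constFree
  | .con x y => x.constFree ∧ y.constFree

/-- The short-circuit evaluation tree of a formula. -/
def se {A : Type} : Fm A → Tr A
  | .tru => .tt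
  | .atom a => .node .tt a .ff
  | .neg x => (se x).subst .ff .tt
  | .con x y => (se x).subst (se y) .ff

/-- A valuation algebra: a nonempty set of valuations together with an
evaluation `/ : 𝒜 × V → Bool` and a derivative `• : 𝒜 × V → V`. -/
structure ValAlg (A : Type) : Type 1 where
  V : Type
  nonempty : Nonempty V
  eval : A → V → Bool
  deriv : A → V → V

namespace ValAlg

variable {A : Type}

/-- Simultaneous extension of evaluation and derivative to formulas:
`ev u x H = (x/H, x•H)`. -/
def ev (u : ValAlg A) : Fm A → u.V → Bool × u.V
  | .tru, H => (true, H)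
  | .atom a, H => (u.eval a H, u.deriv a H)
  | .neg x, H => ((u.ev x H).1.not, (u.ev x H).2)
  | .con x y, H => if (u.ev x H).1 then u.ev y (u.ev x H).2 else (false, (u.ev x H).2)

/-- The evaluation `x/H` of a formula. -/
def fEval (u : ValAlg A) (x : Fm A) (H : u.V) : Bool := (u.ev x H).1

/-- The derivative `x•H` of a formula. -/
def fDeriv (u : ValAlg A) (x : Fm A) (H : u.V) : u.V := (u.ev x H).2

/-- Repetition-proof valuation algebra: a/(a•H) = a/H. -/
def RepProof (u : ValAlg A) : Prop :=
  ∀ a H, u.eval a (u.deriv a H) = u.eval a H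

/-- Contractive: repetition-proof and a•a•H = a•H. -/
def Contractive (u : ValAlg A) : Prop :=
  u.RepProof ∧ ∀ a H, u.deriv a (u.deriv a H) = u.deriv a H

/-- Memorizing: contractive and a/(b•a•H) = a/H, a•b•a•H = b•a•H. -/
def Memorizing (u : ValAlg A) : Prop :=
  u.Contractive ∧
    (∀ a b H, u.eval a (u.deriv b (u.deriv a H)) = u.eval a H) ∧
    (∀ a b H, u.deriv a (u.deriv b (u.deriv a H)) = u.deriv b (u.deriv a H))

/-- Static: memorizing and a/(b•H) = a/H. -/
def Static (u : ValAlg A) : Prop :=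
  u.Memorizing ∧ ∀ a b H, u.eval a (u.deriv b H) = u.eval a H

end ValAlg

/-- Valuation congruence with respect to a valuation algebra. -/
def VCongr {A : Type} (u : ValAlg A) (x y : Fm A) : Prop :=
  ∀ H : u.V, u.fEval x H = u.fEval y H ∧ u.fDeriv x H = u.fDeriv y H

/-- Satisfiability w.r.t. all valuation algebras. -/
def SATfr {A : Type} (x : Fm A) : Prop :=
  ∃ u : ValAlg A, ∃ H : u.V, u.fEval x H = true

/-- Satisfiability w.r.t. repetition-proof valuation algebras. -/
def SATrp {A : Type} (x : Fm A) : Prop :=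
  ∃ u : ValAlg A, u.RepProof ∧ ∃ H : u.V, u.fEval x H = true

/-- Satisfiability w.r.t. contractive valuation algebras. -/
def SATcn {A : Type} (x : Fm A) : Prop :=
  ∃ u : ValAlg A, u.Contractive ∧ ∃ H : u.V, u.fEval x H = true

/-- Satisfiability w.r.t. memorizing valuation algebras. -/
def SATmem {A : Type} (x : Fm A) : Prop :=
  ∃ u : ValAlg A, u.Memorizing ∧ ∃ H : u.V, u.fEval x H = true

/-- Satisfiability w.r.t. static valuation algebras. -/
def SATst {A : Type} (x : Fm A) : Prop :=
  ∃ u : ValAlg A, u.Static ∧ ∃ H : u.V, u.fEval x H = true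

/-- A valuation path: a finite sequence of pairs in 𝒜 × {T, F}. -/
abbrev VPath (A : Type) := List (A × Bool)

/-- The (partial) result `P : X` of a valuation path on a tree. -/
def result {A : Type} [DecidableEq A] : VPath A → Tr A → Option Bool
  | [], .tt => some true
  | [], .ff => some false
  | (u, b) :: Q, .node X₁ a X₂ =>
      if u = a then (if b then result Q X₁ else result Q X₂) else none
  | _ :: _, .tt => none
  | _ :: _, .ff => none
  | [], .node _ _ _ => none

/-- A path is repetition-proof if equal adjacent atoms carry equal values. -/
def RepProofPath {A : Type} : VPath A → Prop
  | (u, b) :: (v, c) :: t => (u = v → b = c) ∧ RepProofPath ((v, c) :: t)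
  | _ => True

/-- A path is memorizing if equal atoms anywhere carry equal values. -/
def MemPath {A : Type} (P : VPath A) : Prop :=
  ∀ u b c, (u, b) ∈ P → (u, c) ∈ P → b = c

/-- Free path-satisfiability. -/
def PathSatFr {A : Type} [DecidableEq A] (x : Fm A) : Prop :=
  ∃ P : VPath A, result P (se x) = some true

/-- Rp-path-satisfiability. -/
def PathSatRp {A : Type} [DecidableEq A] (x : Fm A) : Prop :=
  ∃ P : VPath A, RepProofPath P ∧ result P (se x) = some true

/-- Mem-path-satisfiability. -/
def PathSatMem {A : Type} [DecidableEq A] (x : Fm A) : Prop :=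
  ∃ P : VPath A, MemPath P ∧ result P (se x) = some true

/-- Free path-falsifiability. -/
def PathFalFr {A : Type} [DecidableEq A] (x : Fm A) : Prop :=
  ∃ P : VPath A, result P (se x) = some false

/-- The evaluation path `x ⋄ H`. -/
def ValAlg.epath {A : Type} (u : ValAlg A) : Fm A → u.V → VPath A
  | .tru, _ => []
  | .atom a, H => [(a, u.eval a H)]
  | .neg x, H => u.epath x H
  | .con x y, H =>
      if u.fEval x H then u.epath x H ++ u.epath y (u.fDeriv x H) else u.epath x H

/-- `lastIdx a P k` is the largest 1-based index `i ≤ min k |P|` with `uᵢ = a`,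
or 0 if no such index exists. -/
def lastIdx {A : Type} [DecidableEq A] (a : A) (P : VPath A) : ℕ → ℕ
  | 0 => 0
  | k + 1 => if (P[k]?).map Prod.fst = some a then k + 1 else lastIdx a P k

/-- The norm-based constructor `va`; the valuation `i : Fin (|P| + 1)`
represents the 1-based valuation `i + 1` of the paper. -/
def va {A : Type} [DecidableEq A] (P : VPath A) : ValAlg A where
  V := Fin (P.length + 1)
  nonempty := ⟨0⟩
  eval a i :=
    match lastIdx a P (i.1 + 1) with
    | 0 => false
    | j + 1 => ((P[j]?).map Prod.snd).getD false
  deriv a i :=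
    if h : i.1 < P.length ∧ (P[i.1]?).map Prod.fst = some a
    then ⟨i.1 + 1, by omega⟩ else i

/-- Helper for contraction: `cnAux a Q` drops leading repetitions of `a`. -/
def cnAux {A : Type} [DecidableEq A] : A → VPath A → VPath A
  | _, [] => []
  | a, (u, b) :: Q => if u = a then cnAux a Q else (u, b) :: cnAux u Q

/-- The contraction of a valuation path. -/
def cn {A : Type} [DecidableEq A] : VPath A → VPath A
  | [] => []
  | (u, b) :: Q => (u, b) :: cnAux u Q

/-- The norm-based constructor `sva`, a trivial valuation algebra. -/
def sva {A : Type} [DecidableEq A] (P : VPath A) : ValAlg A where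
  V := PUnit
  nonempty := ⟨PUnit.unit⟩
  eval a _ := decide ((a, true) ∈ P)
  deriv _ H := H

/-!
In a static algebra no derivative changes the value of an atom, so by induction on formulas
`x/H` depends only on the atom values `a/H`. The trivial algebra on `{H}` that copies these
values and has identity derivatives is static as well, hence it evaluates every formula as `H`
does.
-/

namespace ValAlg

variable {A : Type}

@[simp]
lemma fEval_con (u : ValAlg A) (x y : Fm A) (H : u.V) :
    u.fEval (.con x y) H = (u.fEval x H && u.fEval y (u.fDeriv x H)) := by
  simp only [fEval, fDeriv, ev]
  cases (u.ev x H).1 <;> rfl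

@[simp]
lemma fDeriv_con (u : ValAlg A) (x y : Fm A) (H : u.V) :
    u.fDeriv (.con x y) H =
      if u.fEval x H then u.fDeriv y (u.fDeriv x H) else u.fDeriv x H := by
  simp only [fEval, fDeriv, ev]
  by_cases h : (u.ev x H).1 <;> simp [h]

lemma eval_fDeriv (u : ValAlg A) (hu : ∀ a b H, u.eval a (u.deriv b H) = u.eval a H)
    (a : A) (x : Fm A) (H : u.V) : u.eval a (u.fDeriv x H) = u.eval a H := by
  induction x generalizing H with
  | tru => rfl
  | atom b => exact hu a b H
  | neg x ih => exact ih H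
  | con x y ihx ihy =>
    rw [fDeriv_con]
    split_ifs
    · rw [ihy, ihx]
    · exact ihx H

lemma fEval_eq_of_eval_eq (u v : ValAlg A)
    (hu : ∀ a b H, u.eval a (u.deriv b H) = u.eval a H)
    (hv : ∀ a b K, v.eval a (v.deriv b K) = v.eval a K)
    (x : Fm A) {H : u.V} {K : v.V} (hHK : ∀ a, u.eval a H = v.eval a K) :
    u.fEval x H = v.fEval x K := by
  induction x generalizing H K with
  | tru => rfl
  | atom a => exact hHK a
  | neg x ih => exact congrArg not (ih hHK)
  | con x y ihx ihy =>
    have hDeriv : ∀ a, u.eval a (u.fDeriv x H) = v.eval a (v.fDeriv x K) := fun a => by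
      rw [eval_fDeriv u hu, eval_fDeriv v hv, hHK]
    rw [fEval_con, fEval_con, ihx hHK, ihy hDeriv]

end ValAlg

/-- For a static valuation algebra and a fixed valuation `H`,
there is a trivial valuation algebra on the singleton `{H}` in which every
formula evaluates as it does at `H` in the original algebra. -/
theorem stmt_5 {A : Type} (u : ValAlg A) (hu : u.Static) (H : u.V) :
    ∃ (e : A → {G : u.V // G = H} → Bool)
      (d : A → {G : u.V // G = H} → {G : u.V // G = H}),
      ∀ x : Fm A,
        (ValAlg.mk {G : u.V // G = H} ⟨⟨H, rfl⟩⟩ e d).fEval x ⟨H, rfl⟩ =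
          u.fEval x H :=
  ⟨fun a _ => u.eval a H, fun _ G => G, fun x =>
    ValAlg.fEval_eq_of_eval_eq _ u (fun _ _ _ => rfl) hu.2 x fun _ => rfl⟩
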